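/- Let d ≥ 1, ε ∈ ℝ, and let S : ℝ^d → ℝ, A : ℝ^d → ℂ be smooth (C^∞). With the operators N₁(S,A) = ( −|∇S|²/2 , −∇S·∇A − (A/2)ΔS + (i/2)ΔA ) and N₄(S,A) = ( ε²ΔS , −iε A ΔS ), and their Gateaux derivatives DN₁(S,A)·(S₀,A₀) = ( −∇S·∇S₀ , −∇S·∇A₀ − (A₀/2)ΔS − ∇S₀·∇A − (A/2)ΔS₀ + (i/2)ΔA₀ ) and DN₄(S,A)·(S₀,A₀) = ( ε²ΔS₀ , −iε( A₀ΔS + AΔS₀ ) ), the commutator [N₁,N₄](S,A) := DN₁(S,A)·N₄(S,A) − DN₄(S,A)·N₁(S,A) equals, at every point, ( ε² Σ_{k=1}^d |∇(∂_k S)|² , (ε − ε²) ( ∇ΔS·∇A + (A/2)Δ²S ) − iε A Σ_{k=1}^d |∇(∂_k S)|² ). -/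

import Mathlib

/-!
The identity is a direct computation with the product rule. Besides it, only two facts enter:
the symmetry of second partial derivatives, which lets `∂ₖ` commute with `Δ`, and the flat
Bochner identity `Δ(|∇S|²/2) = Σₖ |∇∂ₖS|² + ∇S·∇ΔS`, which produces the terms `Σₖ |∇∂ₖS|²`.
In the amplitude, `(i/2)Δ` applied to `−iεAΔS` contributes `ε(∇ΔS·∇A + (A/2)Δ²S)`, while
`DN₁` applied to the phase `ε²ΔS` contributes the same expression with `−ε²`.
-/

noncomputable section

open Real Complex Finset

/-- Partial derivative in the `k`-th coordinate direction of a function on `ℝ^d`. -/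
def pds {d : ℕ} {E : Type*} [NormedAddCommGroup E] [NormedSpace ℝ E]
    (f : (Fin d → ℝ) → E) (k : Fin d) (x : Fin d → ℝ) : E :=
  fderiv ℝ f x (Pi.single k 1)

/-- Laplacian `Δ = ∑ₖ ∂²_{x_k}` of a function on `ℝ^d`. -/
def laps {d : ℕ} {E : Type*} [NormedAddCommGroup E] [NormedSpace ℝ E]
    (f : (Fin d → ℝ) → E) (x : Fin d → ℝ) : E :=
  ∑ k : Fin d, pds (pds f k) k x

/-- First (phase) component of the operator `N₁(S,A) = (−|∇S|²/2, −∇S·∇A − (A/2)ΔS + (i/2)ΔA)`. -/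
def opN1S {d : ℕ} (S : (Fin d → ℝ) → ℝ) : (Fin d → ℝ) → ℝ :=
  fun x => -(∑ k : Fin d, (pds S k x) ^ 2) / 2

/-- Second (amplitude) component of the operator `N₁`. -/
def opN1A {d : ℕ} (S : (Fin d → ℝ) → ℝ) (A : (Fin d → ℝ) → ℂ) : (Fin d → ℝ) → ℂ :=
  fun x => -(∑ k : Fin d, ((pds S k x : ℝ) : ℂ) * pds A k x)
    - A x / 2 * ((laps S x : ℝ) : ℂ) + Complex.I / 2 * laps A x

/-- First component of the Gateaux derivative `DN₁(S,A)·(S₀,A₀)`. -/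
def opDN1S {d : ℕ} (S S₀ : (Fin d → ℝ) → ℝ) : (Fin d → ℝ) → ℝ :=
  fun x => -∑ k : Fin d, pds S k x * pds S₀ k x

/-- Second component of the Gateaux derivative `DN₁(S,A)·(S₀,A₀)`. -/
def opDN1A {d : ℕ} (S : (Fin d → ℝ) → ℝ) (A : (Fin d → ℝ) → ℂ)
    (S₀ : (Fin d → ℝ) → ℝ) (A₀ : (Fin d → ℝ) → ℂ) : (Fin d → ℝ) → ℂ :=
  fun x => -(∑ k : Fin d, ((pds S k x : ℝ) : ℂ) * pds A₀ k x)
    - A₀ x / 2 * ((laps S x : ℝ) : ℂ)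
    - (∑ k : Fin d, ((pds S₀ k x : ℝ) : ℂ) * pds A k x)
    - A x / 2 * ((laps S₀ x : ℝ) : ℂ)
    + Complex.I / 2 * laps A₀ x

/-- First (phase) component of the operator `N₄(S,A) = (ε²ΔS, −iεAΔS)`. -/
def opN4S {d : ℕ} (ε : ℝ) (S : (Fin d → ℝ) → ℝ) : (Fin d → ℝ) → ℝ :=
  fun x => ε ^ 2 * laps S x

/-- Second (amplitude) component of the operator `N₄`. -/
def opN4A {d : ℕ} (ε : ℝ) (S : (Fin d → ℝ) → ℝ) (A : (Fin d → ℝ) → ℂ) : (Fin d → ℝ) → ℂ :=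
  fun x => -Complex.I * (ε : ℂ) * A x * ((laps S x : ℝ) : ℂ)

/-- First component of the Gateaux derivative `DN₄(S,A)·(S₀,A₀) = (ε²ΔS₀, −iε(A₀ΔS + AΔS₀))`. -/
def opDN4S {d : ℕ} (ε : ℝ) (S₀ : (Fin d → ℝ) → ℝ) : (Fin d → ℝ) → ℝ :=
  fun x => ε ^ 2 * laps S₀ x

/-- Second component of the Gateaux derivative `DN₄(S,A)·(S₀,A₀)`. -/
def opDN4A {d : ℕ} (ε : ℝ) (S : (Fin d → ℝ) → ℝ) (A : (Fin d → ℝ) → ℂ)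
    (S₀ : (Fin d → ℝ) → ℝ) (A₀ : (Fin d → ℝ) → ℂ) : (Fin d → ℝ) → ℂ :=
  fun x => -Complex.I * (ε : ℂ) *
    (A₀ x * ((laps S x : ℝ) : ℂ) + A x * ((laps S₀ x : ℝ) : ℂ))

section Calculus

variable {d : ℕ} {E F : Type*} [NormedAddCommGroup E] [NormedSpace ℝ E]
  [NormedAddCommGroup F] [NormedSpace ℝ F]

theorem pds_clm_comp (L : E →L[ℝ] F) {f : (Fin d → ℝ) → E} {x : Fin d → ℝ}
    (hf : DifferentiableAt ℝ f x) (k : Fin d) :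
    pds (fun y => L (f y)) k x = L (pds f k x) := by
  simp only [pds, fderiv_fun_comp x L.differentiableAt hf, L.fderiv]
  rfl

theorem contDiff_pds {n : WithTop ℕ∞} {f : (Fin d → ℝ) → E} (hf : ContDiff ℝ (n + 1) f)
    (k : Fin d) : ContDiff ℝ n (pds f k) :=
  (hf.fderiv_right le_rfl).clm_apply contDiff_const

theorem contDiff_laps {n : WithTop ℕ∞} {f : (Fin d → ℝ) → E} (hf : ContDiff ℝ (n + 2) f) :
    ContDiff ℝ n (laps f) :=
  ContDiff.sum fun k _ => contDiff_pds (contDiff_pds (n := n + 1) (by rwa [add_assoc]) k) k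

theorem pds_pds_eq_fderiv_fderiv {f : (Fin d → ℝ) → E} (hf : ContDiff ℝ 2 f) (j k : Fin d)
    (x : Fin d → ℝ) :
    pds (pds f k) j x = fderiv ℝ (fderiv ℝ f) x (Pi.single j 1) (Pi.single k 1) := by
  have hdf : DifferentiableAt ℝ (fderiv ℝ f) x :=
    (hf.fderiv_right (m := 1) (by norm_num)).differentiable one_ne_zero x
  exact pds_clm_comp (ContinuousLinearMap.apply ℝ E (Pi.single k 1)) hdf j

theorem pds_comm {f : (Fin d → ℝ) → E} (hf : ContDiff ℝ 2 f) (j k : Fin d) (x : Fin d → ℝ) :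
    pds (pds f k) j x = pds (pds f j) k x := by
  rw [pds_pds_eq_fderiv_fderiv hf, pds_pds_eq_fderiv_fderiv hf]
  exact (hf.contDiffAt.isSymmSndFDerivAt (by simp)).eq _ _


theorem pds_add {f g : (Fin d → ℝ) → E} {x : Fin d → ℝ} (hf : DifferentiableAt ℝ f x)
    (hg : DifferentiableAt ℝ g x) (k : Fin d) :
    pds (fun y => f y + g y) k x = pds f k x + pds g k x := by
  simp only [pds, fderiv_fun_add hf hg, add_apply]

theorem pds_sum {ι : Type*} (u : Finset ι) {f : ι → (Fin d → ℝ) → E} {x : Fin d → ℝ}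
    (hf : ∀ i ∈ u, DifferentiableAt ℝ (f i) x) (k : Fin d) :
    pds (fun y => ∑ i ∈ u, f i y) k x = ∑ i ∈ u, pds (f i) k x := by
  simp only [pds, fderiv_fun_sum hf, _root_.sum_apply]

theorem pds_const_mul {𝕜 : Type*} [NormedField 𝕜] [NormedAlgebra ℝ 𝕜] (c : 𝕜)
    (f : (Fin d → ℝ) → 𝕜) (k : Fin d) :
    pds (fun y => c * f y) k = fun x => c * pds f k x := by
  funext x
  change fderiv ℝ (c • f) x _ = _
  rw [fderiv_const_smul_field]
  rfl

theorem pds_mul {𝔸 : Type*} [NormedCommRing 𝔸] [NormedAlgebra ℝ 𝔸] {f g : (Fin d → ℝ) → 𝔸}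
    {x : Fin d → ℝ} (hf : DifferentiableAt ℝ f x) (hg : DifferentiableAt ℝ g x) (k : Fin d) :
    pds (fun y => f y * g y) k x = pds f k x * g x + f x * pds g k x := by
  simp only [pds, fderiv_fun_mul hf hg, add_apply,
    smul_apply, smul_eq_mul]
  ring

theorem pds_ofReal {f : (Fin d → ℝ) → ℝ} {x : Fin d → ℝ} (hf : DifferentiableAt ℝ f x)
    (k : Fin d) : pds (fun y => (f y : ℂ)) k x = (pds f k x : ℝ) :=
  pds_clm_comp Complex.ofRealCLM hf k

theorem laps_const_mul {𝕜 : Type*} [NormedField 𝕜] [NormedAlgebra ℝ 𝕜] (c : 𝕜)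
    (f : (Fin d → ℝ) → 𝕜) : laps (fun y => c * f y) = fun x => c * laps f x := by
  funext x
  simp only [laps, pds_const_mul, Finset.mul_sum]

theorem laps_sum {ι : Type*} (u : Finset ι) {f : ι → (Fin d → ℝ) → E}
    (hf : ∀ i ∈ u, ContDiff ℝ 2 (f i)) (x : Fin d → ℝ) :
    laps (fun y => ∑ i ∈ u, f i y) x = ∑ i ∈ u, laps (f i) x := by
  have hpds : ∀ k, pds (fun y => ∑ i ∈ u, f i y) k = fun y => ∑ i ∈ u, pds (f i) k y :=
    fun k => funext fun y => pds_sum u (fun i hi => (hf i hi).differentiable two_ne_zero y) k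
  simp only [laps, hpds]
  rw [Finset.sum_comm]
  refine Finset.sum_congr rfl fun k _ => pds_sum u (fun i hi => ?_) k
  exact (contDiff_pds (n := 1) (hf i hi) k).differentiable one_ne_zero x


theorem laps_mul {𝔸 : Type*} [NormedCommRing 𝔸] [NormedAlgebra ℝ 𝔸] {f g : (Fin d → ℝ) → 𝔸}
    (hf : ContDiff ℝ 2 f) (hg : ContDiff ℝ 2 g) (x : Fin d → ℝ) :
    laps (fun y => f y * g y) x
      = laps f x * g x + 2 * ∑ k : Fin d, pds f k x * pds g k x + f x * laps g x := by
  have df := hf.differentiable two_ne_zero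
  have dg := hg.differentiable two_ne_zero
  have dpf k := (contDiff_pds (n := 1) hf k).differentiable one_ne_zero
  have dpg k := (contDiff_pds (n := 1) hg k).differentiable one_ne_zero
  have hpds : ∀ k, pds (fun y => f y * g y) k = fun y => pds f k y * g y + f y * pds g k y :=
    fun k => funext fun y => pds_mul (df y) (dg y) k
  have hterm : ∀ k, pds (pds (fun y => f y * g y) k) k x
      = pds (pds f k) k x * g x + 2 * (pds f k x * pds g k x) + f x * pds (pds g k) k x := by
    intro k
    rw [hpds, pds_add ((dpf k x).fun_mul (dg x)) ((df x).fun_mul (dpg k x)),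
      pds_mul (dpf k x) (dg x), pds_mul (df x) (dpg k x)]
    ring
  simp only [laps, hterm, Finset.sum_add_distrib, Finset.sum_mul, Finset.mul_sum]

theorem laps_ofReal {f : (Fin d → ℝ) → ℝ} (hf : ContDiff ℝ 2 f) (x : Fin d → ℝ) :
    laps (fun y => (f y : ℂ)) x = (laps f x : ℝ) := by
  have hpds : ∀ k, pds (fun y => (f y : ℂ)) k = fun y => ((pds f k y : ℝ) : ℂ) :=
    fun k => funext fun y => pds_ofReal (hf.differentiable two_ne_zero y) k
  simp only [laps, hpds, Complex.ofReal_sum]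
  exact Finset.sum_congr rfl fun k _ =>
    pds_ofReal ((contDiff_pds (n := 1) hf k).differentiable one_ne_zero x) k

theorem laps_pds {f : (Fin d → ℝ) → E} (hf : ContDiff ℝ 3 f) (k : Fin d) (x : Fin d → ℝ) :
    laps (pds f k) x = pds (laps f) k x := by
  have hpds : ∀ j, pds (pds f k) j = pds (pds f j) k :=
    fun j => funext fun y => pds_comm (hf.of_le (by norm_num)) j k y
  rw [laps, show laps f = fun y => ∑ j : Fin d, pds (pds f j) j y from rfl,
    pds_sum _ (fun j _ => ((contDiff_pds (n := 1) (contDiff_pds (n := 2) hf j) j).differentiable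
      one_ne_zero x))]
  refine Finset.sum_congr rfl fun j _ => ?_
  rw [hpds, pds_comm (contDiff_pds (n := 2) hf j) j k]


theorem laps_sum_pds_sq {S : (Fin d → ℝ) → ℝ} (hS : ContDiff ℝ 3 S) (x : Fin d → ℝ) :
    laps (fun y => ∑ k : Fin d, pds S k y ^ 2) x
      = 2 * ∑ k : Fin d, ∑ j : Fin d, pds (pds S k) j x ^ 2
        + 2 * ∑ k : Fin d, pds S k x * pds (laps S) k x := by
  have hpS k : ContDiff ℝ 2 (pds S k) := contDiff_pds hS k
  rw [laps_sum _ fun k _ => (hpS k).pow 2, Finset.mul_sum, Finset.mul_sum,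
    ← Finset.sum_add_distrib]
  refine Finset.sum_congr rfl fun k _ => ?_
  simp only [sq, laps_mul (hpS k) (hpS k), laps_pds hS]
  ring

end Calculus

section Operators

variable {d : ℕ} {ε : ℝ} {S : (Fin d → ℝ) → ℝ} {A : (Fin d → ℝ) → ℂ}

theorem pds_opN4S (k : Fin d) (x : Fin d → ℝ) :
    pds (opN4S ε S) k x = ε ^ 2 * pds (laps S) k x :=
  congrFun (pds_const_mul (ε ^ 2) (laps S) k) x

theorem laps_opN4S (x : Fin d → ℝ) : laps (opN4S ε S) x = ε ^ 2 * laps (laps S) x :=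
  congrFun (laps_const_mul (ε ^ 2) (laps S)) x

theorem pds_opN4A {x : Fin d → ℝ} (hS : DifferentiableAt ℝ (laps S) x)
    (hA : DifferentiableAt ℝ A x) (k : Fin d) :
    pds (opN4A ε S A) k x = -Complex.I * ε *
      (pds A k x * (laps S x : ℝ) + A x * (pds (laps S) k x : ℝ)) := by
  change pds (fun y => (-Complex.I * ε) * A y * ((laps S y : ℝ) : ℂ)) k x = _
  rw [pds_mul (g := fun y => ((laps S y : ℝ) : ℂ)) (hA.const_mul _)
      (Complex.ofRealCLM.differentiableAt.comp x hS), pds_const_mul,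
    pds_ofReal hS]
  ring

theorem laps_opN4A (hS : ContDiff ℝ 4 S) (hA : ContDiff ℝ 2 A) (x : Fin d → ℝ) :
    laps (opN4A ε S A) x = -Complex.I * ε *
      (laps A x * (laps S x : ℝ)
        + 2 * ∑ k : Fin d, (pds (laps S) k x : ℝ) * pds A k x
        + A x * (laps (laps S) x : ℝ)) := by
  have hΔS : ContDiff ℝ 2 (laps S) := contDiff_laps hS
  have hB : ContDiff ℝ 2 (fun y => ((laps S y : ℝ) : ℂ)) := Complex.ofRealCLM.contDiff.comp hΔS
  change laps (fun y => (-Complex.I * ε) * A y * ((laps S y : ℝ) : ℂ)) x = _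
  simp only [laps_mul (contDiff_const.mul hA) hB, laps_const_mul, laps_ofReal hΔS,
    pds_const_mul, pds_ofReal ((hΔS.differentiable two_ne_zero) x)]
  simp only [mul_assoc, ← Finset.mul_sum, mul_comm (pds A _ x)]
  ring

theorem laps_opN1S (hS : ContDiff ℝ 3 S) (x : Fin d → ℝ) :
    laps (opN1S S) x = -∑ k : Fin d, ∑ j : Fin d, pds (pds S k) j x ^ 2
      - ∑ k : Fin d, pds S k x * pds (laps S) k x := by
  have hN1S : opN1S S = fun y => (-1 / 2 : ℝ) * ∑ k : Fin d, pds S k y ^ 2 :=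
    funext fun y => by simp only [opN1S]; ring
  simp only [hN1S, laps_const_mul, laps_sum_pds_sq hS]
  ring

theorem commutator_N1_N4_phase (hS : ContDiff ℝ 3 S) (x : Fin d → ℝ) :
    opDN1S S (opN4S ε S) x - opDN4S ε (opN1S S) x
      = ε ^ 2 * ∑ k : Fin d, ∑ j : Fin d, pds (pds S k) j x ^ 2 := by
  simp only [opDN1S, opDN4S, pds_opN4S, laps_opN1S hS, mul_left_comm _ (ε ^ 2), ← Finset.mul_sum]
  ring

theorem commutator_N1_N4_amplitude (hS : ContDiff ℝ 4 S) (hA : ContDiff ℝ 2 A)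
    (x : Fin d → ℝ) :
    opDN1A S A (opN4S ε S) (opN4A ε S A) x - opDN4A ε S A (opN1S S) (opN1A S A) x
      = ((ε : ℂ) - (ε : ℂ) ^ 2) *
          ((∑ k : Fin d, ((pds (laps S) k x : ℝ) : ℂ) * pds A k x)
            + A x / 2 * ((laps (laps S) x : ℝ) : ℂ))
        - Complex.I * (ε : ℂ) * A x *
          ((∑ k : Fin d, ∑ j : Fin d, (pds (pds S k) j x) ^ 2 : ℝ) : ℂ) := by
  have hΔS := (contDiff_laps (n := 2) hS).differentiable two_ne_zero x
  simp only [opDN1A, opDN4A, pds_opN4A hΔS ((hA.differentiable two_ne_zero) x), pds_opN4S,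
    laps_opN4S, laps_opN4A hS hA, laps_opN1S (hS.of_le (by norm_num)), opN4A, opN1A]
  push_cast
  have hdot_S_N4A : ∑ k : Fin d, ((pds S k x : ℝ) : ℂ) *
        (-Complex.I * ε * (pds A k x * (laps S x : ℝ) + A x * (pds (laps S) k x : ℝ)))
      = -Complex.I * ε * ((laps S x : ℝ) * ∑ k : Fin d, ((pds S k x : ℝ) : ℂ) * pds A k x
          + A x * ∑ k : Fin d, ((pds S k x : ℝ) : ℂ) * (pds (laps S) k x : ℝ)) := by
    simp only [Finset.mul_sum, ← Finset.sum_add_distrib]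
    exact Finset.sum_congr rfl fun k _ => by ring
  have hdot_N4S_A : ∑ k : Fin d, (ε : ℂ) ^ 2 * (pds (laps S) k x : ℝ) * pds A k x
      = (ε : ℂ) ^ 2 * ∑ k : Fin d, ((pds (laps S) k x : ℝ) : ℂ) * pds A k x := by
    simp only [Finset.mul_sum, mul_assoc]
  rw [hdot_S_N4A, hdot_N4S_A]
  linear_combination (-(ε : ℂ) * (∑ k : Fin d, ((pds (laps S) k x : ℝ) : ℂ) * pds A k x
    + A x / 2 * (laps (laps S) x : ℝ))) * Complex.I_sq

end Operators

theorem commutator_N1_N4_general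
    (d : ℕ) (ε : ℝ)
    (S : (Fin d → ℝ) → ℝ) (A : (Fin d → ℝ) → ℂ)
    (hS : ContDiff ℝ (⊤ : ℕ∞) S) (hA : ContDiff ℝ (⊤ : ℕ∞) A) :
    ∀ x : Fin d → ℝ,
      (opDN1S S (opN4S ε S) x - opDN4S ε (opN1S S) x
        = ε ^ 2 * ∑ k : Fin d, ∑ j : Fin d, (pds (pds S k) j x) ^ 2)
      ∧ (opDN1A S A (opN4S ε S) (opN4A ε S A) x
            - opDN4A ε S A (opN1S S) (opN1A S A) x
          = ((ε : ℂ) - (ε : ℂ) ^ 2) *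
              ((∑ k : Fin d, ((pds (laps S) k x : ℝ) : ℂ) * pds A k x)
                + A x / 2 * ((laps (laps S) x : ℝ) : ℂ))
            - Complex.I * (ε : ℂ) * A x *
              ((∑ k : Fin d, ∑ j : Fin d, (pds (pds S k) j x) ^ 2 : ℝ) : ℂ)) :=
  fun x => ⟨commutator_N1_N4_phase (hS.of_le (WithTop.coe_le_coe.mpr le_top)) x,
    commutator_N1_N4_amplitude (hS.of_le (WithTop.coe_le_coe.mpr le_top))
      (hA.of_le (WithTop.coe_le_coe.mpr le_top)) x⟩

/-- For smooth `S : ℝ^d → ℝ` and `A : ℝ^d → ℂ`, the commutator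
`[N₁,N₄](S,A) = DN₁(S,A)·N₄(S,A) − DN₄(S,A)·N₁(S,A)` equals, at every point,
`(ε²Σₖ|∇(∂ₖS)|², (ε−ε²)(∇ΔS·∇A + (A/2)Δ²S) − iεAΣₖ|∇(∂ₖS)|²)`. -/
theorem commutator_N1_N4
    (d : ℕ) (hd : 1 ≤ d) (ε : ℝ)
    (S : (Fin d → ℝ) → ℝ) (A : (Fin d → ℝ) → ℂ)
    (hS : ContDiff ℝ (⊤ : ℕ∞) S) (hA : ContDiff ℝ (⊤ : ℕ∞) A) :
    ∀ x : Fin d → ℝ,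
      (opDN1S S (opN4S ε S) x - opDN4S ε (opN1S S) x
        = ε ^ 2 * ∑ k : Fin d, ∑ j : Fin d, (pds (pds S k) j x) ^ 2)
      ∧ (opDN1A S A (opN4S ε S) (opN4A ε S A) x
            - opDN4A ε S A (opN1S S) (opN1A S A) x
          = ((ε : ℂ) - (ε : ℂ) ^ 2) *
              ((∑ k : Fin d, ((pds (laps S) k x : ℝ) : ℂ) * pds A k x)
                + A x / 2 * ((laps (laps S) x : ℝ) : ℂ))
            - Complex.I * (ε : ℂ) * A x *
              ((∑ k : Fin d, ∑ j : Fin d, (pds (pds S k) j x) ^ 2 : ℝ) : ℂ)) :=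
  commutator_N1_N4_general d ε S A hS hA
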